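/- For a Hamiltonian diagonal in the position basis, the symbol-level short-time exponential is exact at every time: if H is the diagonal matrix with real entries h : ZMod d → ℝ, then (i) the phase-space symbol of H satisfies H_W(m,n) = h(m) for all (m,n), and (ii) for every t ∈ ℝ, the phase-space symbol of the matrix exponential exp(−i t H) satisfies (exp(−i t H))_W(m,n) = Complex.exp(−i t h(m)) for all (m,n) ∈ ZMod d × ZMod d. -/

import Mathlib

open Matrix Complex

noncomputable section

/-- `ω = exp(2πi/d)`, a primitive `d`-th root of unity. -/
def omega (d : ℕ) : ℂ := Complex.exp (2 * Real.pi * Complex.I / d)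

/-- Powers of `ω` with exponent valued in `ZMod d`, evaluated via the canonical
integer representative (well-defined since `ω ^ d = 1`). -/
def wpow (d : ℕ) (x : ZMod d) : ℂ := omega d ^ x.val

/-- The clock matrix `Z`, acting as `Z e_n = ω^n e_n`. -/
def clockZ (d : ℕ) : Matrix (ZMod d) (ZMod d) ℂ :=
  Matrix.diagonal (fun n => wpow d n)

/-- The shift matrix `X`, acting as `X e_n = e_{n+1}`. -/
def shiftX (d : ℕ) : Matrix (ZMod d) (ZMod d) ℂ :=
  Matrix.of (fun i j => if i = j + 1 then 1 else 0)

/-- The displacement operator `D(k,j) = ω^{-2⁻¹ k j} Z^k X^j`. -/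
def Dop (d : ℕ) [NeZero d] (k j : ZMod d) : Matrix (ZMod d) (ZMod d) ℂ :=
  wpow d (-(2⁻¹ * k * j)) • (clockZ d ^ k.val * shiftX d ^ j.val)

/-- The Weyl symbol of a matrix `A`: `Ã(k,j) = Tr(A · D(k,j))`. -/
def weylSymbol (d : ℕ) [NeZero d] (A : Matrix (ZMod d) (ZMod d) ℂ) (k j : ZMod d) : ℂ :=
  Matrix.trace (A * Dop d k j)

/-- The phase-space symbol of `B`:
`B_W(m,n) = (1/d) Σ_{k,j} Tr(B·D(k,j)) ω^{jn−km}`. -/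
def psSymbol (d : ℕ) [NeZero d] (B : Matrix (ZMod d) (ZMod d) ℂ) (m n : ZMod d) : ℂ :=
  (1 / (d : ℂ)) * ∑ k : ZMod d, ∑ j : ZMod d,
    weylSymbol d B k j * wpow d (j * n - k * m)

section aux
variable (d : ℕ) [NeZero d]

lemma omega_pow_d : omega d ^ d = 1 := by
  have := (Complex.isPrimitiveRoot_exp d (NeZero.ne d)).pow_eq_one
  simpa [omega] using this

lemma omega_pow_mod (n : ℕ) : omega d ^ n = omega d ^ (n % d) := by
  conv_lhs => rw [← Nat.mod_add_div n d, pow_add, pow_mul, omega_pow_d, one_pow, mul_one]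

lemma wpow_mul (k c : ZMod d) : wpow d (k * c) = (omega d ^ c.val) ^ k.val := by
  rw [wpow, ZMod.val_mul, ← omega_pow_mod, ← pow_mul, Nat.mul_comm]

lemma wpow_add (x y : ZMod d) : wpow d (x + y) = wpow d x * wpow d y := by
  rw [wpow, wpow, wpow, ZMod.val_add, ← omega_pow_mod, pow_add]

lemma wpow_zero : wpow d 0 = 1 := by
  simp [wpow, ZMod.val_zero]

lemma sum_val (g : ℕ → ℂ) : ∑ k : ZMod d, g k.val = ∑ r ∈ Finset.range d, g r := by
  refine Finset.sum_nbij' (i := fun k => k.val) (j := fun r => (r : ZMod d)) ?_ ?_ ?_ ?_ ?_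
  · intro a _; exact Finset.mem_range.mpr (ZMod.val_lt a)
  · intro a _; exact Finset.mem_univ _
  · intro a _; simp [ZMod.natCast_val, ZMod.cast_id]
  · intro a ha; exact ZMod.val_cast_of_lt (Finset.mem_range.mp ha)
  · intro a _; rfl

lemma sum_wpow (c : ZMod d) : ∑ k : ZMod d, wpow d (k * c) = if c = 0 then (d : ℂ) else 0 := by
  split_ifs with hc
  · subst hc; simp [mul_zero, wpow_zero d, Finset.card_univ]
  · have hx1 : omega d ^ c.val ≠ 1 := by
      refine (Complex.isPrimitiveRoot_exp d (NeZero.ne d)).pow_ne_one_of_pos_of_lt ?_ (ZMod.val_lt c)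
      exact (fun h => hc ((ZMod.val_eq_zero c).mp h))
    have hxd : (omega d ^ c.val) ^ d = 1 := by
      rw [← pow_mul, Nat.mul_comm, pow_mul, omega_pow_d, one_pow]
    calc ∑ k : ZMod d, wpow d (k * c) = ∑ r ∈ Finset.range d, (omega d ^ c.val) ^ r := by
          simp_rw [wpow_mul]; exact sum_val d _
      _ = ((omega d ^ c.val) ^ d - 1) / (omega d ^ c.val - 1) := geom_sum_eq hx1 d
      _ = 0 := by rw [hxd, sub_self, zero_div]

end aux

lemma shiftX_pow (d : ℕ) [NeZero d] (r : ℕ) :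
    shiftX d ^ r = Matrix.of (fun i j => if i = j + (r : ZMod d) then 1 else 0) := by
  induction r with
  | zero => ext i j; simp [Matrix.one_apply, eq_comm]
  | succ r ih =>
    ext i j
    rw [pow_succ, ih]
    simp only [Matrix.mul_apply, Matrix.of_apply, shiftX]
    rw [Finset.sum_eq_single (j + 1)]
    · simp [add_comm, add_assoc, add_left_comm]
    · intro b _ hb; simp [hb]
    · simp

lemma clockZ_pow (d : ℕ) [NeZero d] (r : ℕ) :
    clockZ d ^ r = Matrix.diagonal (fun n => wpow d n ^ r) := by
  rw [clockZ, Matrix.diagonal_pow]; rfl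

lemma weyl_diag (d : ℕ) [NeZero d] (f : ZMod d → ℂ) (k j : ZMod d) :
    weylSymbol d (Matrix.diagonal f) k j
      = if j = 0 then ∑ a : ZMod d, f a * wpow d (k * a) else 0 := by
  rw [weylSymbol, Dop, clockZ_pow, shiftX_pow, Matrix.mul_smul, Matrix.trace_smul,
    ← Matrix.mul_assoc, Matrix.diagonal_mul_diagonal, Matrix.trace]
  have key : ∀ a : ZMod d,
      Matrix.diag ((Matrix.diagonal (fun n => f n * wpow d n ^ k.val))
        * Matrix.of (fun i j' : ZMod d => if i = j' + ((j.val : ℕ) : ZMod d) then (1:ℂ) else 0)) a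
      = if j = 0 then f a * wpow d (k * a) else 0 := by
    intro a
    rw [Matrix.diag_apply, Matrix.diagonal_mul, Matrix.of_apply, ZMod.natCast_val, ZMod.cast_id]
    have hiff : (a = a + j) ↔ (j = 0) := by
      constructor
      · intro hh; exact (left_eq_add.mp hh)
      · intro hh; simp [hh]
    by_cases hj : j = 0
    · rw [if_pos hj, if_pos (hiff.mpr hj), mul_one, wpow_mul, wpow]
    · rw [if_neg hj, if_neg (fun hh => hj (hiff.mp hh)), mul_zero]
  rw [Finset.sum_congr rfl fun a _ => key a]
  by_cases hj : j = 0
  · simp [hj, mul_zero, neg_zero, wpow_zero]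
  · simp [hj]

lemma psSymbol_diag (d : ℕ) [NeZero d] (f : ZMod d → ℂ) (m n : ZMod d) :
    psSymbol d (Matrix.diagonal f) m n = f m := by
  rw [psSymbol]
  have step1 : ∀ k : ZMod d, ∑ j : ZMod d,
      weylSymbol d (Matrix.diagonal f) k j * wpow d (j * n - k * m)
      = ∑ a : ZMod d, f a * wpow d (k * (a - m)) := by
    intro k
    have hz : (∑ j : ZMod d, weylSymbol d (Matrix.diagonal f) k j * wpow d (j * n - k * m))
        = weylSymbol d (Matrix.diagonal f) k 0 * wpow d (0 * n - k * m) :=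
      Finset.sum_eq_single_of_mem 0 (Finset.mem_univ _)
        (fun b _ hb => by rw [weyl_diag, if_neg hb, zero_mul])
    rw [hz, weyl_diag, if_pos rfl, zero_mul, zero_sub, Finset.sum_mul]
    refine Finset.sum_congr rfl fun a _ => ?_
    rw [mul_assoc, ← wpow_add, mul_sub, sub_eq_add_neg]
  rw [Finset.sum_congr rfl fun k _ => step1 k, Finset.sum_comm]
  have step2 : ∀ a : ZMod d, ∑ k : ZMod d, f a * wpow d (k * (a - m))
      = f a * if a - m = 0 then (d : ℂ) else 0 := by
    intro a; rw [← Finset.mul_sum, sum_wpow d (a - m)]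
  rw [Finset.sum_congr rfl fun a _ => step2 a]
  have hz2 : (∑ a : ZMod d, f a * if a - m = 0 then (d : ℂ) else 0)
      = f m * if m - m = 0 then (d : ℂ) else 0 :=
    Finset.sum_eq_single_of_mem m (Finset.mem_univ _)
      (fun b _ hb => by rw [if_neg (by simpa [sub_eq_zero] using hb), mul_zero])
  rw [hz2, if_pos (sub_self m)]
  have hd : (d : ℂ) ≠ 0 := Nat.cast_ne_zero.mpr (NeZero.ne d)
  field_simp


theorem diagonal_hamiltonian_symbol_exact
    (d : ℕ) [NeZero d] (hd : Nat.Prime d) (hodd : Odd d) (h : ZMod d → ℝ) :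
    (∀ m n : ZMod d,
        psSymbol d (Matrix.diagonal (fun a => (h a : ℂ))) m n = (h m : ℂ)) ∧
      (∀ t : ℝ, ∀ m n : ZMod d,
        psSymbol d
            (NormedSpace.exp
              ((-(Complex.I) * (t : ℂ)) • Matrix.diagonal (fun a => (h a : ℂ)))) m n =
          Complex.exp (-(Complex.I) * (t : ℂ) * (h m : ℂ))) := by
  constructor
  · intro m n; exact psSymbol_diag d _ m n
  · intro t m n
    have hexp : NormedSpace.exp
        ((-(Complex.I) * (t : ℂ)) • Matrix.diagonal (fun a => (h a : ℂ)))
        = Matrix.diagonal (fun a => Complex.exp (-(Complex.I) * (t : ℂ) * (h a : ℂ))) := by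
      rw [← Matrix.diagonal_smul, Matrix.exp_diagonal]
      have hfun : NormedSpace.exp ((-(Complex.I) * (t : ℂ)) • fun a => (h a : ℂ))
          = fun a => Complex.exp (-(Complex.I) * (t : ℂ) * (h a : ℂ)) := by
        funext a
        rw [Pi.coe_exp, Pi.smul_apply, smul_eq_mul, Complex.exp_eq_exp_ℂ]
      rw [hfun]
    rw [hexp, psSymbol_diag d _ m n]
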